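/- arXiv:1111.3604 — 2 statements merged into one kernel-verified Lean document; each statement's English description precedes it below -/
import Mathlib

section
/- Let S ⊂ R^n be a porous set (with porosity constant κ ∈ (0,1]), and 1 ≤ p < ∞. Then for every x ∈ S and 0 < r ≤ 1: ∫_{B(x,r)} |log(1/dist(y,S))|^p dy ≤ c r^n (1 + |log(1/r)|^p), where c depends only on n, p, κ. -/
/-!
Porosity forces the sublevel sets of `infDist · S` to shrink geometrically. Each ball of radius
`β ≥ 4t/κ` centred in `{infDist · S ≤ t}` contains a hole of radius `κβ/4` on which
`infDist · S > t`; over a Vitali family of such balls this gives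
`(1 + (κ/16)^d) μ {infDist · S ≤ t} ≤ μ {infDist · S ≤ t + β}` (on slightly larger balls).
Iterating with `t = (κ/8)^k r`, the shell `(κ/8)^(k+1) r < infDist · S ≤ (κ/8)^k r` of `B(x, r)`
has measure at most `θ^k μ(B(x, 3r))` for some `θ < 1`, while on it
`|log (1 / infDist · S)| ≤ (k+1) log (8/κ) + log (1/r)`. Summing the polynomially growing
integrand bound against the geometric decay over `k` gives `C (1 + log (1/r)^p) r^d`.
-/

open MeasureTheory Metric Module
open scoped ENNReal

theorem exists_countable_pairwiseDisjoint_closedBall_cover {X : Type*} [PseudoMetricSpace X]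
    [TopologicalSpace.SeparableSpace X] (A : Set X) {β : ℝ} (hβ : 0 < β) :
    ∃ u ⊆ A, u.Countable ∧ u.PairwiseDisjoint (closedBall · β) ∧
      A ⊆ ⋃ b ∈ u, closedBall b (4 * β) := by
  obtain ⟨u, huA, hdisj, hcover⟩ :=
    Vitali.exists_disjoint_subfamily_covering_enlargement_closedBall A id (fun _ => β) β
      (fun _ _ => le_rfl) 4 (by norm_num)
  refine ⟨u, huA, hdisj.countable_of_nonempty_interior fun b _ =>
    ⟨b, ball_subset_interior_closedBall (mem_ball_self hβ)⟩, hdisj, fun a ha => ?_⟩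
  obtain ⟨b, hb, hab⟩ := hcover a ha
  exact Set.mem_biUnion hb (hab (mem_closedBall_self hβ.le))

theorem setLIntegral_le_tsum_mul_measure {α ι : Type*} [MeasurableSpace α] [Countable ι]
    {μ : Measure α} {s : Set α} {f : α → ℝ≥0∞} {A : ι → Set α} {c : ι → ℝ≥0∞}
    (hcover : ∀ y ∈ s, f y ≠ 0 → ∃ i, y ∈ A i) (hle : ∀ i, ∀ y ∈ A i, f y ≤ c i) :
    ∫⁻ y in s, f y ∂μ ≤ ∑' i, c i * μ (A i) := by
  have hzero : ∫⁻ y in {y | f y = 0}, f y ∂μ = 0 :=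
    nonpos_iff_eq_zero.1 <| (setLIntegral_mono measurable_const fun y hy => le_of_eq hy).trans
      (lintegral_zero).le
  calc ∫⁻ y in s, f y ∂μ ≤ ∫⁻ y in {y | f y = 0} ∪ ⋃ i, A i, f y ∂μ :=
        lintegral_mono_set fun y hy =>
          (em (f y = 0)).imp id fun h => Set.mem_iUnion.2 (hcover y hy h)
    _ ≤ ∫⁻ y in {y | f y = 0}, f y ∂μ + ∫⁻ y in ⋃ i, A i, f y ∂μ := lintegral_union_le _ _ _
    _ ≤ ∑' i, ∫⁻ y in A i, f y ∂μ := by rw [hzero, zero_add]; exact lintegral_iUnion_le _ _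
    _ ≤ ∑' i, c i * μ (A i) := ENNReal.tsum_le_tsum fun i =>
        (setLIntegral_mono measurable_const (hle i)).trans_eq (setLIntegral_const _ _)

theorem Real.add_rpow_le_two_rpow_mul_add_rpow {a b p : ℝ} (ha : 0 ≤ a) (hb : 0 ≤ b)
    (hp : 0 ≤ p) : (a + b) ^ p ≤ 2 ^ p * (a ^ p + b ^ p) := by
  wlog hab : a ≤ b generalizing a b
  · simpa only [add_comm] using this hb ha (le_of_not_ge hab)
  calc (a + b) ^ p ≤ (2 * b) ^ p := by gcongr; linarith
    _ = 2 ^ p * b ^ p := Real.mul_rpow zero_le_two hb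
    _ ≤ 2 ^ p * (a ^ p + b ^ p) := by
      gcongr
      exact le_add_of_nonneg_left (Real.rpow_nonneg ha p)

theorem mul_add_rpow_le_pow_ceil_mul {a M L p : ℝ} (ha : 1 ≤ a) (hM : 0 ≤ M) (hL : 0 ≤ L)
    (hp : 0 ≤ p) : (a * M + L) ^ p ≤ a ^ ⌈p⌉₊ * (2 ^ p * (1 + M ^ p) * (1 + L ^ p)) := by
  have hMp := Real.rpow_nonneg hM p
  have hLp := Real.rpow_nonneg hL p
  calc (a * M + L) ^ p ≤ (a * (M + L)) ^ p := by gcongr; nlinarith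
    _ = a ^ p * (M + L) ^ p := Real.mul_rpow (by linarith) (by positivity)
    _ ≤ a ^ ⌈p⌉₊ * (2 ^ p * (M ^ p + L ^ p)) := by
      gcongr
      · rw [← Real.rpow_natCast]
        exact Real.rpow_le_rpow_of_exponent_le ha (Nat.le_ceil p)
      · exact Real.add_rpow_le_two_rpow_mul_add_rpow hM hL hp
    _ ≤ a ^ ⌈p⌉₊ * (2 ^ p * (1 + M ^ p) * (1 + L ^ p)) := by
      rw [mul_assoc (2 ^ p)]
      gcongr
      nlinarith

theorem exists_tsum_ofReal_mul_add_rpow_mul_pow_le {M p θ : ℝ} (hM : 0 ≤ M) (hp : 0 ≤ p)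
    (hθ0 : 0 < θ) (hθ1 : θ < 1) :
    ∃ C, 0 < C ∧ ∀ L, 0 ≤ L →
      ∑' k : ℕ, ENNReal.ofReal ((((k : ℝ) + 1) * M + L) ^ p * θ ^ k) ≤
        ENNReal.ofReal (C * (1 + L ^ p)) := by
  have hsum : Summable fun k : ℕ => ((k : ℝ) + 1) ^ ⌈p⌉₊ * θ ^ k := by
    have hshift := (summable_nat_add_iff (f := fun k : ℕ => (k : ℝ) ^ ⌈p⌉₊ * θ ^ k) 1).2 <|
      summable_pow_mul_geometric_of_norm_lt_one ⌈p⌉₊ (by rwa [Real.norm_of_nonneg hθ0.le])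
    refine (hshift.mul_left θ⁻¹).congr fun k => ?_
    rw [pow_succ, Nat.cast_add_one]
    field_simp
  refine ⟨(∑' k : ℕ, ((k : ℝ) + 1) ^ ⌈p⌉₊ * θ ^ k) * (2 ^ p * (1 + M ^ p)),
    mul_pos (hsum.tsum_pos (fun _ => by positivity) 0 (by simp)) (by positivity), fun L hL => ?_⟩
  calc ∑' k : ℕ, ENNReal.ofReal ((((k : ℝ) + 1) * M + L) ^ p * θ ^ k)
      ≤ ∑' k : ℕ, ENNReal.ofReal
          (((k : ℝ) + 1) ^ ⌈p⌉₊ * (2 ^ p * (1 + M ^ p) * (1 + L ^ p)) * θ ^ k) := by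
        gcongr with k
        exact mul_add_rpow_le_pow_ceil_mul (by simp) hM hL hp
    _ = ENNReal.ofReal ((∑' k : ℕ, ((k : ℝ) + 1) ^ ⌈p⌉₊ * θ ^ k) * (2 ^ p * (1 + M ^ p)) *
          (1 + L ^ p)) := by
        rw [← tsum_mul_right, ← tsum_mul_right, ENNReal.ofReal_tsum_of_nonneg
          (fun _ => by positivity) ((hsum.mul_right _).mul_right _)]
        refine tsum_congr fun k => congrArg ENNReal.ofReal ?_
        ring

theorem Real.abs_log_one_div_le_log_one_div {a d : ℝ} (ha : 0 < a) (had : a < d) (hd : d ≤ 1) :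
    |Real.log (1 / d)| ≤ Real.log (1 / a) := by
  rw [abs_of_nonneg (Real.log_nonneg (one_le_one_div (ha.trans had) hd))]
  exact Real.log_le_log (one_div_pos.2 (ha.trans had)) (one_div_le_one_div_of_le ha had.le)

def infDistShell {X : Type*} [PseudoMetricSpace X] (S : Set X) (x : X) (r a : ℝ) (k : ℕ) :
    Set X :=
  ball x r ∩ (infDist · S) ⁻¹' Set.Ioc (a ^ (k + 1) * r) (a ^ k * r)

theorem exists_mem_infDistShell {X : Type*} [PseudoMetricSpace X] {S : Set X} {x y : X}
    {r a : ℝ} (hx : x ∈ S) (hy : y ∈ ball x r) (hpos : 0 < infDist y S) (ha0 : 0 < a)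
    (ha1 : a < 1) : ∃ k, y ∈ infDistShell S x r a k := by
  have hr0 : 0 < r := dist_nonneg.trans_lt hy
  have hlt : infDist y S < r := (infDist_le_dist_of_mem hx).trans_lt hy
  obtain ⟨k, hk1, hk2⟩ :=
    exists_nat_pow_near_of_lt_one (div_pos hpos hr0) ((div_le_one hr0).2 hlt.le) ha0 ha1
  exact ⟨k, hy, (lt_div_iff₀ hr0).1 hk1, (div_le_iff₀ hr0).1 hk2⟩

theorem abs_log_one_div_infDist_le {X : Type*} [PseudoMetricSpace X] {S : Set X} {x y : X}
    {r a : ℝ} {k : ℕ} (hy : y ∈ infDistShell S x r a k) (ha0 : 0 < a) (ha1 : a ≤ 1)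
    (hr1 : r ≤ 1) :
    |Real.log (1 / infDist y S)| ≤ ((k : ℝ) + 1) * Real.log (1 / a) + Real.log (1 / r) := by
  obtain ⟨hyx, hlow, hup⟩ := hy
  have hr0 : 0 < r := dist_nonneg.trans_lt hyx
  refine (Real.abs_log_one_div_le_log_one_div (by positivity) hlow
    (hup.trans (mul_le_one₀ (pow_le_one₀ ha0.le ha1) hr0.le hr1))).trans_eq ?_
  simp only [one_div, Real.log_inv, Real.log_mul (pow_pos ha0 _).ne' hr0.ne', Real.log_pow]
  push_cast
  ring

def IsPorousWith {X : Type*} [PseudoMetricSpace X] (κ : ℝ) (S : Set X) : Prop :=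
  ∀ x : X, ∀ r : ℝ, 0 < r → r ≤ 1 → ∃ y ∈ ball x r, ball y (κ * r) ∩ S = ∅

namespace IsPorousWith

theorem exists_ball_subset_ball_lt_infDist {X : Type*} [PseudoMetricSpace X] {κ : ℝ}
    {S : Set X} (hpor : IsPorousWith κ S) (hκ : κ ≤ 1) (hS : S.Nonempty) (z : X)
    {ρ : ℝ} (hρ0 : 0 < ρ) (hρ1 : ρ ≤ 1) :
    ∃ y, ball y (κ * ρ / 4) ⊆ ball z ρ ∧ ∀ w ∈ ball y (κ * ρ / 4), κ * ρ / 4 < infDist w S := by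
  obtain ⟨y, hyz, hempty⟩ := hpor z (ρ / 2) (by linarith) (by linarith)
  have hy : κ * ρ / 2 ≤ infDist y S := by
    refine (le_infDist hS).2 fun s hs => not_lt.1 fun hlt => ?_
    have : s ∈ ball y (κ * (ρ / 2)) ∩ S := ⟨by rw [mem_ball']; linarith, hs⟩
    simp [hempty] at this
  refine ⟨y, fun w hw => ?_, fun w hw => ?_⟩ <;> rw [mem_ball] at hw
  · rw [mem_ball] at hyz ⊢
    have hκρ : κ * ρ ≤ ρ := by nlinarith
    linarith [dist_triangle w y z]
  · linarith [infDist_le_infDist_add_dist (x := y) (y := w) (s := S), dist_comm y w]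

section Measure

variable {E : Type*} [NormedAddCommGroup E] [NormedSpace ℝ E] [FiniteDimensional ℝ E]
  [MeasurableSpace E] [BorelSpace E] (μ : Measure E) [μ.IsAddHaarMeasure] {κ : ℝ} {S : Set E}

theorem one_add_mul_measure_infDist_le (hpor : IsPorousWith κ S)
    (hκ0 : 0 < κ) (hκ1 : κ ≤ 1) (hS : S.Nonempty) (x : E) {R β t : ℝ} (hβ0 : 0 < β)
    (hβ1 : β ≤ 1) (ht : t ≤ κ * β / 4) :
    (1 + ENNReal.ofReal ((κ / 16) ^ finrank ℝ E)) * μ ({y | infDist y S ≤ t} ∩ ball x R) ≤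
      μ ({y | infDist y S ≤ t + β} ∩ ball x (R + β)) := by
  set A := {y | infDist y S ≤ t} ∩ ball x R
  obtain ⟨u, huA, hu, hdisj, hcover⟩ := exists_countable_pairwiseDisjoint_closedBall_cover A hβ0
  choose g hgsub hgfar using fun b => hpor.exists_ball_subset_ball_lt_infDist hκ1 hS b hβ0 hβ1
  set G := fun b => ball (g b) (κ * β / 4)
  have hGdisj : u.PairwiseDisjoint G :=
    hdisj.mono fun b => (hgsub b).trans ball_subset_closedBall
  have hAG : Disjoint A (⋃ b ∈ u, G b) := by
    refine Set.disjoint_iUnion₂_right.2 fun b _ => Set.disjoint_right.2 fun w hw hwA => ?_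
    exact (hgfar b w hw).not_ge (hwA.1.trans ht)
  have hsub : A ∪ ⋃ b ∈ u, G b ⊆ {y | infDist y S ≤ t + β} ∩ ball x (R + β) := by
    refine Set.union_subset (Set.inter_subset_inter (fun y hy => ?_) (ball_subset_ball ?_)) ?_
    · exact le_add_of_le_of_nonneg hy hβ0.le
    · linarith
    refine Set.iUnion₂_subset fun b hb w hw => ?_
    have hwb : dist w b < β := hgsub b hw
    obtain ⟨hbt, hbR⟩ := huA hb
    refine ⟨show infDist w S ≤ t + β from ?_, ?_⟩
    · have hbt' : infDist b S ≤ t := hbt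
      linarith [infDist_le_infDist_add_dist (x := w) (y := b) (s := S)]
    · rw [mem_ball] at hbR ⊢
      linarith [dist_triangle w b x]
  have hGmeasure : ∀ b, μ (G b) =
      ENNReal.ofReal ((κ / 16) ^ finrank ℝ E) * μ (closedBall b (4 * β)) := by
    intro b
    rw [Measure.addHaar_ball_of_pos μ _ (by positivity),
      Measure.addHaar_closedBall μ _ (by positivity), ← mul_assoc,
      ← ENNReal.ofReal_mul (by positivity), ← mul_pow]
    ring_nf
  have hholes : ENNReal.ofReal ((κ / 16) ^ finrank ℝ E) * μ A ≤ μ (⋃ b ∈ u, G b) := calc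
    _ ≤ ENNReal.ofReal ((κ / 16) ^ finrank ℝ E) *
        ∑' b : u, μ (closedBall (b : E) (4 * β)) := by
      gcongr
      exact (measure_mono hcover).trans (measure_biUnion_le μ hu _)
    _ = ∑' b : u, μ (G b) := by
      rw [← ENNReal.tsum_mul_left]
      simp only [hGmeasure]
    _ = μ (⋃ b ∈ u, G b) := (measure_biUnion hu hGdisj fun _ _ => measurableSet_ball).symm
  calc _ = μ A + ENNReal.ofReal ((κ / 16) ^ finrank ℝ E) * μ A := by ring
    _ ≤ μ A + μ (⋃ b ∈ u, G b) := by gcongr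
    _ = μ (A ∪ ⋃ b ∈ u, G b) :=
      (measure_union hAG (MeasurableSet.biUnion hu fun _ _ => measurableSet_ball)).symm
    _ ≤ _ := measure_mono hsub

theorem one_add_pow_mul_measure_infDist_le (hpor : IsPorousWith κ S)
    (hκ0 : 0 < κ) (hκ1 : κ ≤ 1) (hS : S.Nonempty) (x : E) {r : ℝ} (hr0 : 0 < r) (hr1 : r ≤ 1)
    (k : ℕ) :
    (1 + ENNReal.ofReal ((κ / 16) ^ finrank ℝ E)) ^ k *
        μ ({y | infDist y S ≤ (κ / 8) ^ k * r} ∩ ball x (r * (2 + (κ / 8) ^ k))) ≤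
      μ (ball x (3 * r)) := by
  induction k with
  | zero =>
    rw [pow_zero, one_mul]
    exact measure_mono (Set.inter_subset_right.trans (ball_subset_ball (by linarith)))
  | succ k ih =>
    have hpow_pos : 0 < (κ / 8) ^ k := by positivity
    have hpow_le : (κ / 8) ^ k ≤ 1 := pow_le_one₀ (by positivity) (by linarith)
    have hstep := hpor.one_add_mul_measure_infDist_le μ hκ0 hκ1 hS x
      (R := r * (2 + (κ / 8) ^ (k + 1))) (t := (κ / 8) ^ (k + 1) * r)
      (β := (κ / 8) ^ k * r / 2) (by positivity) (by nlinarith) (by rw [pow_succ]; linarith)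
    refine le_trans ?_ ih
    rw [pow_succ, mul_assoc]
    gcongr
    refine hstep.trans <|
      measure_mono (Set.inter_subset_inter (fun y hy => ?_) (ball_subset_ball ?_))
    · refine le_trans hy.out ?_
      rw [pow_succ]
      nlinarith [mul_pos hpow_pos hr0]
    · rw [pow_succ]
      nlinarith [mul_pos hpow_pos hr0]

theorem measure_infDistShell_le (hpor : IsPorousWith κ S) (hκ0 : 0 < κ) (hκ1 : κ ≤ 1) {x : E}
    (hx : x ∈ S) {r : ℝ} (hr0 : 0 < r) (hr1 : r ≤ 1) (k : ℕ) :
    μ (infDistShell S x r (κ / 8) k) ≤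
      ENNReal.ofReal ((1 + (κ / 16) ^ finrank ℝ E)⁻¹ ^ k) * μ (ball x (3 * r)) := by
  have hdecay := hpor.one_add_pow_mul_measure_infDist_le μ hκ0 hκ1 ⟨x, hx⟩ x hr0 hr1 k
  rw [ENNReal.mul_le_iff_le_inv (by simp) (by simp)] at hdecay
  refine (measure_mono ?_).trans (hdecay.trans_eq ?_)
  · rintro y ⟨hy, -, hup⟩
    have : 0 ≤ (κ / 8) ^ k := by positivity
    exact ⟨hup, ball_subset_ball (by nlinarith) hy⟩
  · rw [inv_pow, ENNReal.ofReal_inv_of_pos (by positivity),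
      ENNReal.ofReal_pow (by positivity : (0 : ℝ) ≤ 1 + (κ / 16) ^ finrank ℝ E),
      ENNReal.ofReal_add zero_le_one (by positivity), ENNReal.ofReal_one]

theorem exists_setLIntegral_abs_log_infDist_rpow_le (hpor : IsPorousWith κ S) (hκ0 : 0 < κ)
    (hκ1 : κ ≤ 1) {p : ℝ} (hp : 0 < p) :
    ∃ C, 0 < C ∧ ∀ x ∈ S, ∀ r, 0 < r → r ≤ 1 →
      ∫⁻ y in ball x r, ENNReal.ofReal (|Real.log (1 / infDist y S)| ^ p) ∂μ ≤
        ENNReal.ofReal (C * (1 + |Real.log (1 / r)| ^ p)) * μ (ball x (3 * r)) := by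
  set M := Real.log (1 / (κ / 8))
  have hM : 0 ≤ M := Real.log_nonneg (one_le_one_div (by positivity) (by linarith))
  obtain ⟨C, hC, hsum⟩ := exists_tsum_ofReal_mul_add_rpow_mul_pow_le hM hp.le
    (inv_pos.2 (by positivity : 0 < 1 + (κ / 16) ^ finrank ℝ E))
    (inv_lt_one_of_one_lt₀ (lt_add_of_pos_right 1 (by positivity)))
  refine ⟨C, hC, fun x hx r hr0 hr1 => ?_⟩
  have hL : 0 ≤ Real.log (1 / r) := Real.log_nonneg (one_le_one_div hr0 hr1)
  rw [abs_of_nonneg hL]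
  -- `log (1 / 0) = 0`, so points of `closure S` contribute nothing.
  have hcover : ∀ y ∈ ball x r, ENNReal.ofReal (|Real.log (1 / infDist y S)| ^ p) ≠ 0 →
      ∃ k, y ∈ infDistShell S x r (κ / 8) k := fun y hy hy0 =>
    exists_mem_infDistShell hx hy (infDist_nonneg.lt_of_ne' fun h => hy0 <| by
      simp [h, Real.zero_rpow hp.ne']) (by positivity) (by linarith)
  calc ∫⁻ y in ball x r, ENNReal.ofReal (|Real.log (1 / infDist y S)| ^ p) ∂μ
      ≤ ∑' k : ℕ, ENNReal.ofReal ((((k : ℝ) + 1) * M + Real.log (1 / r)) ^ p) *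
          μ (infDistShell S x r (κ / 8) k) :=
        setLIntegral_le_tsum_mul_measure hcover fun k y hy => ENNReal.ofReal_le_ofReal <|
          Real.rpow_le_rpow (abs_nonneg _)
            (abs_log_one_div_infDist_le hy (by positivity) (by linarith) hr1) hp.le
    _ ≤ ∑' k : ℕ, ENNReal.ofReal ((((k : ℝ) + 1) * M + Real.log (1 / r)) ^ p *
          (1 + (κ / 16) ^ finrank ℝ E)⁻¹ ^ k) * μ (ball x (3 * r)) := by
        refine ENNReal.tsum_le_tsum fun k => ?_
        rw [ENNReal.ofReal_mul (Real.rpow_nonneg (by positivity) p), mul_assoc]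
        gcongr
        exact hpor.measure_infDistShell_le μ hκ0 hκ1 hx hr0 hr1 k
    _ ≤ ENNReal.ofReal (C * (1 + Real.log (1 / r) ^ p)) * μ (ball x (3 * r)) := by
        rw [ENNReal.tsum_mul_right]
        gcongr
        exact hsum _ hL

end Measure

end IsPorousWith

theorem porous_log_integral_bound_general (n : ℕ) (p κ : ℝ) (hp : 1 ≤ p)
    (hκ : κ ∈ Set.Ioc (0:ℝ) 1) (S : Set (EuclideanSpace ℝ (Fin n)))
    (hpor : ∀ x : EuclideanSpace ℝ (Fin n), ∀ r : ℝ, 0 < r → r ≤ 1 →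
      ∃ y ∈ ball x r, ball y (κ * r) ∩ S = ∅) :
    ∃ c : ℝ, 0 < c ∧ ∀ x ∈ S, ∀ r : ℝ, 0 < r → r ≤ 1 →
      ∫⁻ y in ball x r, ENNReal.ofReal (|Real.log (1 / infDist y S)| ^ p)
        ≤ ENNReal.ofReal (c * r ^ (n : ℝ) * (1 + |Real.log (1 / r)| ^ p)) := by
  obtain ⟨C, hC, hbound⟩ := IsPorousWith.exists_setLIntegral_abs_log_infDist_rpow_le volume hpor
    hκ.1 hκ.2 (by linarith : 0 < p)
  have hV : volume (ball (0 : EuclideanSpace ℝ (Fin n)) 1) ≠ ⊤ := measure_ball_lt_top.ne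
  refine ⟨C * 3 ^ n * (volume (ball (0 : EuclideanSpace ℝ (Fin n)) 1)).toReal,
    mul_pos (by positivity) (ENNReal.toReal_pos (measure_ball_pos _ _ one_pos).ne' hV),
    fun x hx r hr0 hr1 => (hbound x hx r hr0 hr1).trans_eq ?_⟩
  rw [Measure.addHaar_ball_of_pos volume x (by positivity), finrank_euclideanSpace_fin]
  conv_lhs => rw [← ENNReal.ofReal_toReal hV]
  rw [← ENNReal.ofReal_mul (by positivity), ← ENNReal.ofReal_mul (by positivity),
    Real.rpow_natCast]
  ring_nf

/-- If `S ⊆ ℝ^n` is porous with porosity constant `κ ∈ (0,1]` and `1 ≤ p < ∞`, then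
for every `x ∈ S` and `0 < r ≤ 1`,
`∫_{B(x,r)} |log(1/dist(y,S))|^p dy ≤ c r^n (1 + |log(1/r)|^p)` with `c = c(n,p,κ)`. -/
theorem porous_log_integral_bound (n : ℕ) (hn : 0 < n) (p κ : ℝ) (hp : 1 ≤ p)
    (hκ : κ ∈ Set.Ioc (0:ℝ) 1) (S : Set (EuclideanSpace ℝ (Fin n)))
    (hpor : ∀ x : EuclideanSpace ℝ (Fin n), ∀ r : ℝ, 0 < r → r ≤ 1 →
      ∃ y ∈ ball x r, ball y (κ * r) ∩ S = ∅) :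
    ∃ c : ℝ, 0 < c ∧ ∀ x ∈ S, ∀ r : ℝ, 0 < r → r ≤ 1 →
      ∫⁻ y in ball x r, ENNReal.ofReal (|Real.log (1 / infDist y S)| ^ p)
        ≤ ENNReal.ofReal (c * r ^ (n : ℝ) * (1 + |Real.log (1 / r)| ^ p)) :=
  porous_log_integral_bound_general n p κ hp hκ S hpor
end

section
/- Let B be a ball of radius r in R^n, 1 ≤ p < ∞, δ ∈ (0,1), and u ∈ L^p(B). Then (1/|B|) ∫_B |u(y) − u_B| dy ≤ c |B|^{δ/n − 1} ∫_B (∫_B |u(y)−u(z)|^p / |y−z|^{n+δp} dz)^{1/p} dy, where c depends only on n, p, δ. -/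
/-!
Write `m = ⨍_B u`. For `y ∈ B`, `|u y - m| ≤ ⨍_B |u y - u z| dz`, and since `|y - z| ≤ 2r` on `B`,
`|u y - u z| ≤ (2r)^α |u y - u z| / |y - z|^α` with `α = (n + δp)/p`. Hölder's (power-mean)
inequality on the averaged `z`-integral then bounds the mean oscillation by
`(2r)^α ⨍_B (⨍_B |u y - u z|^p / |y - z|^(n+δp) dz)^(1/p) dy`, and `|B| = ω r^n`, with `ω` the
volume of the unit ball, turns the factor `(2r)^α |B|^(-1/p - 1)` into `c |B|^(δ/n - 1)`.
-/

open MeasureTheory Metric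
open scoped ENNReal

namespace MeasureTheory

section Average

variable {α : Type*} {m : MeasurableSpace α} {μ : Measure α}

theorem laverage_const_mul {c : ℝ≥0∞} (hc : c ≠ ∞) (f : α → ℝ≥0∞) :
    ⨍⁻ x, c * f x ∂μ = c * ⨍⁻ x, f x ∂μ := by
  rw [laverage_eq', laverage_eq', lintegral_const_mul' _ _ hc]

theorem laverage_rpow_laverage_eq [IsFiniteMeasure μ] [NeZero μ] (h : α → α → ℝ≥0∞) {q : ℝ}
    (hq : 0 ≤ q) :
    ⨍⁻ y, (⨍⁻ z, h y z ∂μ) ^ q ∂μ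
      = (μ Set.univ)⁻¹ ^ q * (μ Set.univ)⁻¹ * ∫⁻ y, (∫⁻ z, h y z ∂μ) ^ q ∂μ := by
  have hinv : (μ Set.univ)⁻¹ ≠ ∞ :=
    ENNReal.inv_ne_top.2 (Measure.measure_univ_ne_zero.2 (NeZero.ne μ))
  simp only [laverage_eq', lintegral_smul_measure, smul_eq_mul, ENNReal.mul_rpow_of_nonneg _ _ hq]
  rw [lintegral_const_mul' _ _ (ENNReal.rpow_ne_top_of_nonneg hq hinv)]
  ring

theorem ofReal_toReal_inv_mul_setIntegral {s : Set α} {f : α → ℝ} (hf : IntegrableOn f s μ)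
    (hf₀ : 0 ≤ᵐ[μ.restrict s] f) :
    ENNReal.ofReal ((μ s).toReal⁻¹ * ∫ x in s, f x ∂μ) = ⨍⁻ x in s, ENNReal.ofReal (f x) ∂μ := by
  rw [← smul_eq_mul, ← measureReal_def, ← setAverage_eq, ofReal_setAverage hf hf₀, setLAverage_eq]

theorem laverage_le_rpow_laverage_rpow {g : α → ℝ≥0∞} (hg : AEMeasurable g μ) {p : ℝ}
    (hp : 1 ≤ p) : ⨍⁻ x, g x ∂μ ≤ (⨍⁻ x, g x ^ p ∂μ) ^ (1 / p) := by
  set ν := (μ Set.univ)⁻¹ • μ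
  have hν : ν Set.univ ≤ 1 := by simp [ν]
  have holder := eLpNorm'_le_eLpNorm'_mul_rpow_measure_univ one_pos hp
    (hg.smul_measure (μ Set.univ)⁻¹).aestronglyMeasurable
  simp only [eLpNorm'_eq_lintegral_enorm, enorm_eq_self, ENNReal.rpow_one, div_one] at holder
  calc ⨍⁻ x, g x ∂μ ≤ (∫⁻ x, g x ^ p ∂ν) ^ (1 / p) * ν Set.univ ^ (1 - 1 / p) := holder
    _ ≤ (⨍⁻ x, g x ^ p ∂μ) ^ (1 / p) := by
      refine mul_le_of_le_one_right' (ENNReal.rpow_le_one hν ?_)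
      rw [sub_nonneg, div_le_one (by linarith)]
      exact hp

theorem ofReal_abs_sub_average_le_laverage [IsFiniteMeasure μ] [NeZero μ] {f : α → ℝ}
    (hf : Integrable f μ) (c : ℝ) :
    ENNReal.ofReal |c - ⨍ x, f x ∂μ| ≤ ⨍⁻ x, ENNReal.ofReal |c - f x| ∂μ := by
  have hcf : Integrable (fun x ↦ c - f x) μ := (integrable_const c).sub hf
  have hmean : c - ⨍ x, f x ∂μ = ⨍ x, (c - f x) ∂μ := by
    rw [average_eq, average_eq, integral_sub (integrable_const c) hf, integral_const, smul_sub,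
      smul_smul, inv_mul_cancel₀ measureReal_univ_ne_zero, one_smul]
  have habs : |⨍ x, (c - f x) ∂μ| ≤ ⨍ x, |c - f x| ∂μ := by
    simp only [average_eq, smul_eq_mul, abs_mul, abs_inv, abs_of_nonneg measureReal_nonneg]
    gcongr
    exact abs_integral_le_integral_abs
  rw [laverage_eq, ← ofReal_average hcf.abs (ae_of_all _ fun _ ↦ abs_nonneg _), hmean]
  exact ENNReal.ofReal_le_ofReal habs

end Average

theorem laverage_abs_sub_average_le {X : Type*} [MetricSpace X] [MeasurableSpace X]
    [OpensMeasurableSpace X] {μ : Measure X} [IsFiniteMeasure μ] [NeZero μ]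
    [NullSingletonClass μ] {u : X → ℝ} (hu : Integrable u μ) {p s D : ℝ} (hp : 1 ≤ p)
    (hs : 0 ≤ s) (hD : ∀ᵐ y ∂μ, ∀ᵐ z ∂μ, dist y z ≤ D) :
    ⨍⁻ y, ENNReal.ofReal |u y - ⨍ z, u z ∂μ| ∂μ
      ≤ ENNReal.ofReal (D ^ (s / p))
        * ⨍⁻ y, (⨍⁻ z, ENNReal.ofReal (|u y - u z| ^ p / dist y z ^ s) ∂μ) ^ (1 / p) ∂μ := by
  have hp0 : 0 < p := by linarith
  rw [← laverage_const_mul ENNReal.ofReal_ne_top]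
  refine laverage_mono_ae ?_
  filter_upwards [hD] with y hy
  set g : X → ℝ≥0∞ := fun z ↦ ENNReal.ofReal (|u y - u z| / dist y z ^ (s / p))
  have hg : AEMeasurable g μ := by
    have := hu.aestronglyMeasurable.aemeasurable
    fun_prop
  -- `μ` has no atoms, so a.e. `z ≠ y` and `dist y z ^ (s / p)` is positive.
  have hbound : ∀ᵐ z ∂μ, ENNReal.ofReal |u y - u z| ≤ ENNReal.ofReal (D ^ (s / p)) * g z := by
    filter_upwards [hy, μ.ae_ne y] with z hzD hzy
    have hdist : 0 < dist y z ^ (s / p) := Real.rpow_pos_of_pos (dist_pos.2 hzy.symm) _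
    rw [← ENNReal.ofReal_mul (Real.rpow_nonneg (dist_nonneg.trans hzD) _)]
    refine ENNReal.ofReal_le_ofReal ?_
    calc |u y - u z| = dist y z ^ (s / p) * (|u y - u z| / dist y z ^ (s / p)) := by
          field_simp
      _ ≤ D ^ (s / p) * (|u y - u z| / dist y z ^ (s / p)) := by
          gcongr
  have hgp : ∀ z, g z ^ p = ENNReal.ofReal (|u y - u z| ^ p / dist y z ^ s) := by
    intro z
    rw [ENNReal.ofReal_rpow_of_nonneg (by positivity) hp0.le, Real.div_rpow (abs_nonneg _)
      (by positivity), ← Real.rpow_mul dist_nonneg, div_mul_cancel₀ _ hp0.ne']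
  calc ENNReal.ofReal |u y - ⨍ z, u z ∂μ|
      ≤ ⨍⁻ z, ENNReal.ofReal |u y - u z| ∂μ := ofReal_abs_sub_average_le_laverage hu (u y)
    _ ≤ ⨍⁻ z, ENNReal.ofReal (D ^ (s / p)) * g z ∂μ := laverage_mono_ae hbound
    _ = ENNReal.ofReal (D ^ (s / p)) * ⨍⁻ z, g z ∂μ := laverage_const_mul ENNReal.ofReal_ne_top _
    _ ≤ ENNReal.ofReal (D ^ (s / p)) * (⨍⁻ z, g z ^ p ∂μ) ^ (1 / p) := by
      gcongr
      exact laverage_le_rpow_laverage_rpow hg hp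
    _ = _ := by simp only [hgp]

end MeasureTheory

noncomputable def ballOscillationConstant (n : ℕ) (p δ : ℝ) : ℝ :=
  2 ^ ((n + δ * p) / p)
    * (volume (ball (0 : EuclideanSpace ℝ (Fin n)) 1)).toReal ^ (-(1 / p + δ / n))

theorem ballOscillationConstant_pos (n : ℕ) [NeZero n] (p δ : ℝ) :
    0 < ballOscillationConstant n p δ := by
  have hω : 0 < (volume (ball (0 : EuclideanSpace ℝ (Fin n)) 1)).toReal :=
    ENNReal.toReal_pos (measure_ball_pos _ _ one_pos).ne' measure_ball_lt_top.ne
  unfold ballOscillationConstant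
  positivity

theorem ofReal_two_mul_rpow_mul_volume_ball_inv {n : ℕ} [NeZero n] {p : ℝ} (hp : 0 < p)
    (δ : ℝ) (x : EuclideanSpace ℝ (Fin n)) {r : ℝ} (hr : 0 < r) :
    ENNReal.ofReal ((2 * r) ^ ((n + δ * p) / p))
        * ((volume (ball x r))⁻¹ ^ (1 / p) * (volume (ball x r))⁻¹)
      = ENNReal.ofReal
          (ballOscillationConstant n p δ * (volume (ball x r)).toReal ^ (δ / n - 1)) := by
  have hn : (0 : ℝ) < n := by exact_mod_cast Nat.pos_of_neZero n
  set ω := (volume (ball (0 : EuclideanSpace ℝ (Fin n)) 1)).toReal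
  have hω : 0 < ω := ENNReal.toReal_pos (measure_ball_pos _ _ one_pos).ne' measure_ball_lt_top.ne
  have hV : volume (ball x r) = ENNReal.ofReal (ω * r ^ n) := by
    rw [Measure.addHaar_ball volume x hr.le, finrank_euclideanSpace_fin, mul_comm,
      ENNReal.ofReal_mul hω.le, ENNReal.ofReal_toReal measure_ball_lt_top.ne]
  rw [hV, ENNReal.toReal_ofReal (by positivity), ← ENNReal.ofReal_inv_of_pos (by positivity),
    ENNReal.ofReal_rpow_of_nonneg (by positivity) (by positivity),
    ← ENNReal.ofReal_mul (by positivity), ← ENNReal.ofReal_mul (by positivity)]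
  congr 1
  unfold ballOscillationConstant
  -- Both sides are monomials in `2`, `ω` and `r`: compare their logarithms.
  refine Real.log_injOn_pos (Set.mem_Ioi.2 (by positivity)) (Set.mem_Ioi.2 (by positivity)) ?_
  simp (disch := positivity) only [Real.log_mul, Real.log_rpow, Real.log_inv, Real.log_pow]
  field_simp
  ring

/-- On a ball `B` of radius `r`, for `1 ≤ p < ∞`, `δ ∈ (0,1)` and `u ∈ L^p(B)`:
`(1/|B|)∫_B |u − u_B| ≤ c |B|^{δ/n − 1} ∫_B (∫_B |u(y)−u(z)|^p/|y−z|^{n+δp} dz)^{1/p} dy`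
with `c = c(n,p,δ)`. -/
theorem ball_mean_oscillation_bound (n : ℕ) (hn : 0 < n) (p δ : ℝ) (hp : 1 ≤ p)
    (hδ : δ ∈ Set.Ioo (0:ℝ) 1) :
    ∃ c : ℝ, 0 < c ∧
      ∀ (x₀ : EuclideanSpace ℝ (Fin n)) (r : ℝ), 0 < r →
      ∀ u : EuclideanSpace ℝ (Fin n) → ℝ,
        MemLp u (ENNReal.ofReal p) (volume.restrict (ball x₀ r)) →
        ENNReal.ofReal ((volume (ball x₀ r)).toReal⁻¹
            * ∫ y in ball x₀ r, |u y - ⨍ z in ball x₀ r, u z|)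
          ≤ ENNReal.ofReal (c * (volume (ball x₀ r)).toReal ^ (δ / n - 1))
            * ∫⁻ y in ball x₀ r,
                (∫⁻ z in ball x₀ r,
                  ENNReal.ofReal (|u y - u z| ^ p / dist y z ^ ((n : ℝ) + δ * p))) ^ (1 / p) := by
  have : NeZero n := ⟨hn.ne'⟩
  refine ⟨ballOscillationConstant n p δ, ballOscillationConstant_pos n p δ, ?_⟩
  intro x₀ r hr u hu
  have : NeZero (volume (ball x₀ r)) := ⟨(measure_ball_pos _ _ hr).ne'⟩
  have : IsFiniteMeasure (volume.restrict (ball x₀ r)) :=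
    isFiniteMeasure_restrict.2 measure_ball_lt_top.ne
  have hui : Integrable u (volume.restrict (ball x₀ r)) :=
    hu.integrable (ENNReal.one_le_ofReal.2 hp)
  have hdiam : ∀ᵐ y ∂volume.restrict (ball x₀ r), ∀ᵐ z ∂volume.restrict (ball x₀ r),
      dist y z ≤ 2 * r := by
    filter_upwards [ae_restrict_mem measurableSet_ball] with y hy
    filter_upwards [ae_restrict_mem measurableSet_ball] with z hz
    linarith [dist_triangle_right y z x₀, mem_ball.1 hy, mem_ball.1 hz]
  have hs : 0 ≤ (n : ℝ) + δ * p := by have := hδ.1; positivity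
  rw [ofReal_toReal_inv_mul_setIntegral (f := fun y ↦ |u y - ⨍ z in ball x₀ r, u z|)
    (hui.sub (integrable_const _)).abs (ae_of_all _ fun _ ↦ abs_nonneg _)]
  refine (laverage_abs_sub_average_le hui hp hs hdiam).trans_eq ?_
  rw [laverage_rpow_laverage_eq _ (by positivity), Measure.restrict_apply_univ, ← mul_assoc,
    ofReal_two_mul_rpow_mul_volume_ball_inv (by positivity) δ x₀ hr]
end
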